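/- Let (Ω, μ) be a measure space and let f, g : Ω → ℝ^d be strongly measurable functions with ∫ ‖f‖³ dμ < ∞ and ∫ ‖g‖³ dμ < ∞. Then ∫ ⟨‖f(x)‖·f(x) − ‖g(x)‖·g(x), f(x) − g(x)⟩ dμ(x) ≥ (1/2) · ‖f − g‖_{L³(μ)}³, where ‖h‖_{L³(μ)} = (∫ ‖h(x)‖³ dμ(x))^{1/3}. -/

import Mathlib

/-!
The identity `⟪‖a‖ • a - ‖b‖ • b, a - b⟫ = (‖a‖ + ‖b‖) (‖a - b‖² + (‖a‖ - ‖b‖)²) / 2`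
together with `‖a - b‖ ≤ ‖a‖ + ‖b‖` gives the inequality pointwise, and the same identity bounds
the integrand by `2 (‖a‖³ + ‖b‖³)`, so it is integrable and the pointwise bound can be integrated.
-/

open MeasureTheory

section Pointwise

variable {E : Type*} [NormedAddCommGroup E] [InnerProductSpace ℝ E]

theorem inner_norm_smul_sub_norm_smul_eq (a b : E) :
    (inner ℝ (‖a‖ • a - ‖b‖ • b) (a - b) : ℝ) =
      (‖a‖ + ‖b‖) * (‖a - b‖ ^ 2 + (‖a‖ - ‖b‖) ^ 2) / 2 := by
  rw [← real_inner_self_eq_norm_sq (a - b)]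
  simp only [inner_sub_left, inner_sub_right, real_inner_smul_left,
    real_inner_self_eq_norm_sq, real_inner_comm a b]
  ring

theorem half_mul_norm_sub_pow_three_le_inner_norm_smul_sub (a b : E) :
    (1 / 2 : ℝ) * ‖a - b‖ ^ 3 ≤ (inner ℝ (‖a‖ • a - ‖b‖ • b) (a - b) : ℝ) := by
  have hr : ‖a - b‖ ^ 3 ≤ (‖a‖ + ‖b‖) * ‖a - b‖ ^ 2 := by
    rw [pow_succ']
    exact mul_le_mul_of_nonneg_right (norm_sub_le a b) (sq_nonneg _)
  have hst : 0 ≤ (‖a‖ + ‖b‖) * (‖a‖ - ‖b‖) ^ 2 := by positivity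
  rw [inner_norm_smul_sub_norm_smul_eq]
  linarith

theorem abs_inner_norm_smul_sub_norm_smul_le (a b : E) :
    |(inner ℝ (‖a‖ • a - ‖b‖ • b) (a - b) : ℝ)| ≤ 2 * (‖a‖ ^ 3 + ‖b‖ ^ 3) := by
  have ha := norm_nonneg a
  have hb := norm_nonneg b
  have hr : ‖a - b‖ ^ 2 ≤ (‖a‖ + ‖b‖) ^ 2 :=
    pow_le_pow_left₀ (norm_nonneg _) (norm_sub_le a b) 2
  rw [inner_norm_smul_sub_norm_smul_eq, abs_of_nonneg (by positivity)]
  nlinarith [mul_le_mul_of_nonneg_left hr (add_nonneg ha hb),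
    mul_nonneg (add_nonneg ha hb) (sq_nonneg (‖a‖ - ‖b‖))]

end Pointwise

theorem Integrable.inner_norm_smul_sub_norm_smul {Ω E : Type*} [MeasurableSpace Ω]
    {μ : Measure Ω} [NormedAddCommGroup E] [InnerProductSpace ℝ E] {f g : Ω → E}
    (hf : AEStronglyMeasurable f μ) (hg : AEStronglyMeasurable g μ)
    (hf3 : Integrable (fun x => ‖f x‖ ^ 3) μ) (hg3 : Integrable (fun x => ‖g x‖ ^ 3) μ) :
    Integrable (fun x => (inner ℝ (‖f x‖ • f x - ‖g x‖ • g x) (f x - g x) : ℝ)) μ := by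
  refine Integrable.mono' ((hf3.add hg3).const_mul 2) ?_ (ae_of_all _ fun x => ?_)
  · exact ((hf.norm.smul hf).sub (hg.norm.smul hg)).inner (hf.sub hg)
  · exact (Real.norm_eq_abs _).trans_le (abs_inner_norm_smul_sub_norm_smul_le (f x) (g x))

/-- Strong monotonicity (SM) of the Smagorinsky nonlinearity in `L³`:
for `f, g ∈ L³(μ; ℝ^d)`,
`∫ ⟨‖f‖·f − ‖g‖·g, f − g⟩ dμ ≥ (1/2) ‖f − g‖_{L³}³ = (1/2) ∫ ‖f − g‖³ dμ`. -/
theorem strong_monotonicity_L3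
    {Ω : Type*} [MeasurableSpace Ω] (μ : Measure Ω) (d : ℕ)
    (f g : Ω → EuclideanSpace ℝ (Fin d))
    (hf : StronglyMeasurable f) (hg : StronglyMeasurable g)
    (hf3 : Integrable (fun x => ‖f x‖ ^ 3) μ)
    (hg3 : Integrable (fun x => ‖g x‖ ^ 3) μ) :
    (1 / 2 : ℝ) * ∫ x, ‖f x - g x‖ ^ 3 ∂μ ≤
      ∫ x, (inner ℝ (‖f x‖ • f x - ‖g x‖ • g x) (f x - g x) : ℝ) ∂μ := by
  rw [← integral_const_mul]
  exact integral_mono_of_nonneg (ae_of_all _ fun x => by positivity)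
    (Integrable.inner_norm_smul_sub_norm_smul hf.aestronglyMeasurable
      hg.aestronglyMeasurable hf3 hg3)
    (ae_of_all _ fun x => half_mul_norm_sub_pow_three_le_inner_norm_smul_sub (f x) (g x))
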